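/- arXiv:1802.09646 — 4 statements merged into one kernel-verified Lean document; each statement's English description precedes it below -/
import Mathlib

section
/- Let P_1, ..., P_m be row-stochastic matrices on a finite state space, let γ ∈ (0,1), let α be a probability vector, and for each i define the occupancy measure ν_i by ν_i^T = (1-γ) α^T (I - γ P_i)^{-1}. Suppose ε = max_{i,j ∈ [m]} ‖ν_i - ν_j‖_1. Then for every i ∈ [m] and every weight vector w in the probability simplex Δ_[m], the occupancy measure ν_w of the mixture chain P_w = Σ_{k=1}^m w_k P_k, defined by ν_w^T = (1-γ) α^T (I - γ P_w)^{-1}, satisfies ‖ν_i - ν_w‖_1 ≤ ε(1+γ)/(1-γ). -/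
/-!
Write `Aₖ = 1 - γ Pₖ`, so that `νₖ Aₖ = (1 - γ) α` and the mixture matrix is `A_w = ∑ₖ wₖ Aₖ`.
Then `(νᵢ - ν_w) A_w = ∑ₖ wₖ (νᵢ - νₖ) Aₖ`, whose `ℓ¹` norm is at most `(1 + γ) ε` because the
rows of `Aₖ` have `ℓ¹` norm at most `1 + γ`. On the other side, a substochastic `P` is an `ℓ¹`
contraction on row vectors, so `‖z (1 - γ P)‖₁ ≥ (1 - γ) ‖z‖₁` for every `z`; applied to
`z = νᵢ - ν_w` and `P = P_w` this gives `(1 - γ) ‖νᵢ - ν_w‖₁ ≤ (1 + γ) ε`. The same inequality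
shows that `1 - γ P` is invertible.
-/

open Matrix

section L1

variable {X Y ι : Type*} [Fintype X] [Fintype Y] [Fintype ι]

theorem sum_abs_vecMul_le (z : X → ℝ) (M : Matrix X Y ℝ) {C : ℝ}
    (hM : ∀ x, ∑ y, |M x y| ≤ C) : ∑ y, |(z ᵥ* M) y| ≤ C * ∑ x, |z x| := by
  calc ∑ y, |(z ᵥ* M) y| ≤ ∑ y, ∑ x, |z x * M x y| :=
        Finset.sum_le_sum fun y _ => Finset.abs_sum_le_sum_abs _ _
    _ = ∑ x, |z x| * ∑ y, |M x y| := by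
        rw [Finset.sum_comm]
        simp only [abs_mul, Finset.mul_sum]
    _ ≤ ∑ x, |z x| * C := Finset.sum_le_sum fun x _ => by gcongr; exact hM x
    _ = C * ∑ x, |z x| := by rw [← Finset.sum_mul, mul_comm]

theorem sum_abs_sum_smul_le {w : ι → ℝ} (hw₀ : ∀ k, 0 ≤ w k) (hw₁ : ∑ k, w k = 1)
    {v : ι → X → ℝ} {C : ℝ} (hv : ∀ k, ∑ x, |v k x| ≤ C) :
    ∑ x, |(∑ k, w k • v k) x| ≤ C := by
  calc ∑ x, |(∑ k, w k • v k) x| ≤ ∑ x, ∑ k, w k * |v k x| := by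
        refine Finset.sum_le_sum fun x _ => ?_
        rw [Finset.sum_apply]
        refine (Finset.abs_sum_le_sum_abs _ _).trans_eq ?_
        simp only [Pi.smul_apply, smul_eq_mul, abs_mul, abs_of_nonneg (hw₀ _)]
    _ = ∑ k, w k * ∑ x, |v k x| := by
        rw [Finset.sum_comm]
        simp only [Finset.mul_sum]
    _ ≤ ∑ k, w k * C := Finset.sum_le_sum fun k _ => by gcongr; exacts [hw₀ k, hv k]
    _ = C := by rw [← Finset.sum_mul, hw₁, one_mul]

end L1

section Resolvent

variable {X : Type*} [Fintype X] [DecidableEq X]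

theorem sum_abs_one_sub_smul_le {P : Matrix X X ℝ} (hP : ∀ x, ∑ y, |P x y| ≤ 1)
    {γ : ℝ} (hγ : 0 ≤ γ) (x : X) : ∑ y, |(1 - γ • P) x y| ≤ 1 + γ := by
  calc ∑ y, |(1 - γ • P) x y| ≤ ∑ y, (|(1 : Matrix X X ℝ) x y| + γ * |P x y|) := by
        refine Finset.sum_le_sum fun y _ => ?_
        rw [Matrix.sub_apply, Matrix.smul_apply, smul_eq_mul]
        exact (abs_sub _ _).trans_eq (by rw [abs_mul, abs_of_nonneg hγ])
    _ ≤ 1 + γ := by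
        rw [Finset.sum_add_distrib, ← Finset.mul_sum]
        have hone : ∑ y, |(1 : Matrix X X ℝ) x y| = 1 := by simp [one_apply, apply_ite]
        linarith [mul_le_of_le_one_right hγ (hP x)]

theorem one_sub_mul_sum_abs_le_sum_abs_vecMul {P : Matrix X X ℝ}
    (hP : ∀ x, ∑ y, |P x y| ≤ 1) {γ : ℝ} (hγ : 0 ≤ γ) (z : X → ℝ) :
    (1 - γ) * ∑ x, |z x| ≤ ∑ x, |(z ᵥ* (1 - γ • P)) x| := by
  have hzP : γ * ∑ x, |(z ᵥ* P) x| ≤ γ * ∑ x, |z x| :=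
    mul_le_mul_of_nonneg_left ((sum_abs_vecMul_le z P hP).trans_eq (one_mul _)) hγ
  have hdecomp : z = z ᵥ* (1 - γ • P) + γ • z ᵥ* P := by
    rw [vecMul_sub, vecMul_one, vecMul_smul, sub_add_cancel]
  have htriangle : ∑ x, |z x| ≤ ∑ x, |(z ᵥ* (1 - γ • P)) x| + γ * ∑ x, |(z ᵥ* P) x| := by
    conv_lhs => rw [hdecomp]
    rw [Finset.mul_sum, ← Finset.sum_add_distrib]
    refine Finset.sum_le_sum fun x _ => (abs_add_le _ _).trans_eq ?_
    rw [Pi.smul_apply, smul_eq_mul, abs_mul, abs_of_nonneg hγ]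
  linarith

theorem isUnit_one_sub_smul {P : Matrix X X ℝ} (hP : ∀ x, ∑ y, |P x y| ≤ 1)
    {γ : ℝ} (hγ : γ ∈ Set.Ico (0 : ℝ) 1) : IsUnit (1 - γ • P) := by
  refine vecMul_injective_iff_isUnit.mp fun z z' hzz' => ?_
  have h := one_sub_mul_sum_abs_le_sum_abs_vecMul hP hγ.1 (z - z')
  simp only [sub_vecMul, hzz', sub_self, Pi.zero_apply, abs_zero, Finset.sum_const_zero] at h
  have hzero : ∑ x, |(z - z') x| = 0 :=
    le_antisymm (nonpos_of_mul_nonpos_right h (by linarith [hγ.2]))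
      (Finset.sum_nonneg fun _ _ => abs_nonneg _)
  rw [Finset.sum_eq_zero_iff_of_nonneg fun _ _ => abs_nonneg _] at hzero
  exact sub_eq_zero.mp (funext fun x => abs_eq_zero.mp (hzero x (Finset.mem_univ x)))

end Resolvent

theorem vecMul_nonsing_inv_vecMul {X R : Type*} [Fintype X] [DecidableEq X] [CommRing R]
    {A : Matrix X X R} (hA : IsUnit A) (v : X → R) : v ᵥ* A⁻¹ ᵥ* A = v := by
  rw [vecMul_vecMul, nonsing_inv_mul A ((isUnit_iff_isUnit_det A).mp hA), vecMul_one]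

theorem vecMul_sub_eq_sum_smul {X ι R : Type*} [Fintype X] [Fintype ι] [CommRing R]
    {A : ι → Matrix X X R} {w : ι → R} (hw : ∑ k, w k = 1) {b μ : X → R} {ν : ι → X → R}
    (hν : ∀ k, ν k ᵥ* A k = b) (hμ : μ ᵥ* ∑ k, w k • A k = b) (i : ι) :
    (ν i - μ) ᵥ* ∑ k, w k • A k = ∑ k, w k • (ν i - ν k) ᵥ* A k := by
  rw [sub_vecMul, hμ]
  simp only [sub_vecMul, hν, smul_sub, Finset.sum_sub_distrib, ← Finset.sum_smul, hw,
    one_smul, vecMul_sum, vecMul_smul]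

theorem occupancy_mixture_close_general {X : Type*} [Fintype X] [DecidableEq X] {m : ℕ}
    (P : Fin m → Matrix X X ℝ)
    (hPnonneg : ∀ i x x', 0 ≤ P i x x') (hProw : ∀ i x, ∑ x', P i x x' = 1)
    (γ : ℝ) (hγ : γ ∈ Set.Ioo (0 : ℝ) 1)
    (α : X → ℝ)
    (ν : Fin m → X → ℝ)
    (hν : ∀ i, ν i = (1 - γ) • Matrix.vecMul α (1 - γ • P i)⁻¹)
    (ε : ℝ)
    (hε : IsGreatest {d : ℝ | ∃ i j : Fin m, d = ∑ x, |ν i x - ν j x|} ε) :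
    ∀ (i : Fin m) (w : Fin m → ℝ), (∀ k, 0 ≤ w k) → ∑ k, w k = 1 →
      ∑ x, |ν i x -
          ((1 - γ) • Matrix.vecMul α (1 - γ • ∑ k, w k • P k)⁻¹) x| ≤
        ε * (1 + γ) / (1 - γ) := by
  intro i w hw₀ hw₁
  have hγ' : γ ∈ Set.Ico (0 : ℝ) 1 := Set.Ioo_subset_Ico_self hγ
  have hProws : ∀ k x, ∑ y, |P k x y| ≤ 1 := fun k x => by
    simp only [abs_of_nonneg (hPnonneg k x _), hProw k x, le_refl]
  have hQrows : ∀ x, ∑ y, |(∑ k, w k • P k) x y| ≤ 1 := fun x => by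
    simpa only [Matrix.sum_apply, Matrix.smul_apply, Finset.sum_apply, Pi.smul_apply] using
      sum_abs_sum_smul_le hw₀ hw₁ (hProws · x)
  have hmix : 1 - γ • ∑ k, w k • P k = ∑ k, w k • (1 - γ • P k) := by
    simp only [smul_sub, Finset.sum_sub_distrib, ← Finset.sum_smul, hw₁, one_smul,
      Finset.smul_sum, smul_comm γ]
  set μ := (1 - γ) • α ᵥ* (1 - γ • ∑ k, w k • P k)⁻¹
  have hstat : ∀ k, ν k ᵥ* (1 - γ • P k) = (1 - γ) • α := fun k => by
    rw [hν, smul_vecMul, vecMul_nonsing_inv_vecMul (isUnit_one_sub_smul (hProws k) hγ')]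
  have hstatμ : μ ᵥ* ∑ k, w k • (1 - γ • P k) = (1 - γ) • α := by
    rw [← hmix, smul_vecMul, vecMul_nonsing_inv_vecMul (isUnit_one_sub_smul hQrows hγ')]
  have hbound : (1 - γ) * ∑ x, |(ν i - μ) x| ≤ (1 + γ) * ε := by
    refine (one_sub_mul_sum_abs_le_sum_abs_vecMul hQrows hγ.1.le _).trans ?_
    rw [hmix, vecMul_sub_eq_sum_smul hw₁ hstat hstatμ]
    refine sum_abs_sum_smul_le hw₀ hw₁ fun k => (sum_abs_vecMul_le _ _
      (sum_abs_one_sub_smul_le (hProws k) hγ.1.le)).trans ?_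
    exact mul_le_mul_of_nonneg_left (hε.2 ⟨i, k, rfl⟩) (by linarith [hγ.1])
  rw [le_div_iff₀ (by linarith [hγ.2])]
  simp only [Pi.sub_apply] at hbound
  linarith

/-- Let `P 1, …, P m` be row-stochastic matrices on a finite state space,
`γ ∈ (0,1)`, `α` a probability vector, and for each `i` let `ν i` be the occupancy measure
`ν iᵀ = (1-γ) αᵀ (I - γ P i)⁻¹`.  If `ε` is the maximum over `i, j` of `‖ν i - ν j‖₁`, then for
every `i` and every weight vector `w` in the simplex, the occupancy measure of the mixture chain
`P_w = ∑ k, w k • P k` satisfies `‖ν i - ν_w‖₁ ≤ ε (1+γ)/(1-γ)`. -/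
theorem occupancy_mixture_close {X : Type*} [Fintype X] [DecidableEq X] {m : ℕ}
    (P : Fin m → Matrix X X ℝ)
    (hPnonneg : ∀ i x x', 0 ≤ P i x x') (hProw : ∀ i x, ∑ x', P i x x' = 1)
    (γ : ℝ) (hγ : γ ∈ Set.Ioo (0 : ℝ) 1)
    (α : X → ℝ) (hαnonneg : ∀ x, 0 ≤ α x) (hαsum : ∑ x, α x = 1)
    (ν : Fin m → X → ℝ)
    (hν : ∀ i, ν i = (1 - γ) • Matrix.vecMul α (1 - γ • P i)⁻¹)
    (ε : ℝ)
    (hε : IsGreatest {d : ℝ | ∃ i j : Fin m, d = ∑ x, |ν i x - ν j x|} ε) :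
    ∀ (i : Fin m) (w : Fin m → ℝ), (∀ k, 0 ≤ w k) → ∑ k, w k = 1 →
      ∑ x, |ν i x -
          ((1 - γ) • Matrix.vecMul α (1 - γ • ∑ k, w k • P k)⁻¹) x| ≤
        ε * (1 + γ) / (1 - γ) :=
  occupancy_mixture_close_general P hPnonneg hProw γ hγ α ν hν ε hε
end

section
/- Let P_1, ..., P_m be row-stochastic matrices on a finite state space, γ ∈ (0,1), and α a probability vector. Define ρ_i^T = α^T (I - γ P_i)^{-1} and v_{i,k} = ρ_i - ρ_k for all i,k ∈ [m]. Then for any i ∈ [m] and any w in the probability simplex Δ_[m], writing P_w = Σ_{k=1}^m w_k P_k, one has ρ_i^T - α^T (I - γ P_w)^{-1} = Σ_{k=1}^m w_k v_{i,k}^T (I - γ P_k) (I - γ P_w)^{-1}. -/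
/-!
Write `A_k = I - γ P_k`, so that `ρ_k A_k = α`. Since `Σ w_k = 1`, the matrices `A_k` combine to
`A_w = I - γ P_w = Σ w_k A_k`, hence `Σ w_k (ρ_i - ρ_k) A_k = ρ_i A_w - α`, and multiplying on the
right by `A_w⁻¹` gives the identity. Invertibility of every `I - γ M` with `M` row-stochastic
(in particular of `A_w`, as `P_w` is again row-stochastic) comes from `‖γ M‖_∞ ≤ γ < 1`.
-/

open Matrix

section RowStochastic

variable {n : Type*} [Fintype n] [DecidableEq n]

attribute [local instance] Matrix.linftyOpNormedRing Matrix.linftyOpNormedAlgebra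

theorem Matrix.linfty_opNNNorm_le_one_of_mem_rowStochastic {M : Matrix n n ℝ}
    (hM : M ∈ rowStochastic ℝ n) : ‖M‖₊ ≤ 1 := by
  rw [linfty_opNNNorm_def]
  refine Finset.sup_le fun i _ => le_of_eq ?_
  rw [← NNReal.coe_inj, NNReal.coe_sum, NNReal.coe_one, ← sum_row_of_mem_rowStochastic hM i]
  exact Finset.sum_congr rfl fun j _ => Real.norm_of_nonneg (nonneg_of_mem_rowStochastic hM)

theorem Matrix.isUnit_one_sub_smul_of_mem_rowStochastic {M : Matrix n n ℝ}
    (hM : M ∈ rowStochastic ℝ n) {γ : ℝ} (hγ : |γ| < 1) : IsUnit (1 - γ • M) := by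
  refine isUnit_one_sub_of_norm_lt_one ?_
  calc ‖γ • M‖ ≤ ‖γ‖ * ‖M‖ := norm_smul_le γ M
    _ ≤ |γ| * 1 := by
      rw [Real.norm_eq_abs]
      gcongr
      exact_mod_cast linfty_opNNNorm_le_one_of_mem_rowStochastic hM
    _ < 1 := by rwa [mul_one]

end RowStochastic

theorem Finset.sum_smul_sub_const {ι R M : Type*} [Ring R] [AddCommGroup M] [Module R M]
    {s : Finset ι} {w : ι → R} (hw : ∑ k ∈ s, w k = 1) (x : ι → M) (c : M) :
    ∑ k ∈ s, w k • (x k - c) = ∑ k ∈ s, w k • x k - c := by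
  simp only [smul_sub, Finset.sum_sub_distrib, ← Finset.sum_smul, hw, one_smul]

theorem Matrix.sub_vecMul_inv_eq_sum_smul {ι R n : Type*} [CommRing R] [Fintype n] [DecidableEq n]
    {s : Finset ι} {w : ι → R} (hw : ∑ k ∈ s, w k = 1) {A : ι → Matrix n n R} {B : Matrix n n R}
    (hB : ∑ k ∈ s, w k • A k = B) (hBdet : IsUnit B.det) {α : n → R} {ρ : ι → n → R}
    (hρ : ∀ k ∈ s, ρ k ᵥ* A k = α) (r : n → R) :
    r - α ᵥ* B⁻¹ = ∑ k ∈ s, w k • (((r - ρ k) ᵥ* A k) ᵥ* B⁻¹) := by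
  have hsum : ∑ k ∈ s, w k • ((r - ρ k) ᵥ* A k) = r ᵥ* B - α := by
    simp_rw [← hB, vecMul_sum, vecMul_smul, ← Finset.sum_smul_sub_const hw]
    refine Finset.sum_congr rfl fun k hk => ?_
    rw [sub_vecMul, hρ k hk]
  calc r - α ᵥ* B⁻¹ = (r ᵥ* B - α) ᵥ* B⁻¹ := by
        rw [sub_vecMul, vecMul_vecMul, mul_nonsing_inv _ hBdet, vecMul_one]
    _ = ∑ k ∈ s, w k • (((r - ρ k) ᵥ* A k) ᵥ* B⁻¹) := by
        simp only [← hsum, sum_vecMul, smul_vecMul]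

theorem mixture_resolvent_difference_general {X : Type*} [Fintype X] [DecidableEq X] {m : ℕ}
    (P : Fin m → Matrix X X ℝ)
    (hPnonneg : ∀ i x x', 0 ≤ P i x x') (hProw : ∀ i x, ∑ x', P i x x' = 1)
    (γ : ℝ) (hγ : γ ∈ Set.Ioo (0 : ℝ) 1)
    (α : X → ℝ)
    (ρ : Fin m → X → ℝ) (hρ : ∀ i, ρ i = Matrix.vecMul α (1 - γ • P i)⁻¹)
    (v : Fin m → Fin m → X → ℝ) (hv : ∀ i k, v i k = ρ i - ρ k) :
    ∀ (i : Fin m) (w : Fin m → ℝ), (∀ k, 0 ≤ w k) → ∑ k, w k = 1 →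
      ρ i - Matrix.vecMul α (1 - γ • ∑ k, w k • P k)⁻¹ =
        ∑ k, w k •
          Matrix.vecMul (Matrix.vecMul (v i k) (1 - γ • P k))
            (1 - γ • ∑ l, w l • P l)⁻¹ := by
  intro i w hw hw1
  have hunit {M : Matrix X X ℝ} (hM : M ∈ rowStochastic ℝ X) : IsUnit (1 - γ • M).det :=
    (isUnit_iff_isUnit_det _).1 <|
      isUnit_one_sub_smul_of_mem_rowStochastic hM (abs_lt.2 ⟨by linarith [hγ.1], hγ.2⟩)
  have hP k : P k ∈ rowStochastic ℝ X := mem_rowStochastic_iff_sum.2 ⟨hPnonneg k, hProw k⟩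
  have hPw : ∑ k, w k • P k ∈ rowStochastic ℝ X :=
    convex_rowStochastic.sum_mem (fun k _ => hw k) hw1 (fun k _ => hP k)
  have hA : ∑ k, w k • (1 - γ • P k) = 1 - γ • ∑ k, w k • P k := by
    simp only [smul_sub, Finset.sum_sub_distrib, ← Finset.sum_smul, hw1, one_smul, Finset.smul_sum,
      smul_comm γ]
  simp only [hv]
  refine sub_vecMul_inv_eq_sum_smul hw1 hA (hunit hPw) (fun k _ => ?_) (ρ i)
  rw [hρ k, vecMul_vecMul, nonsing_inv_mul _ (hunit (hP k)), vecMul_one]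

/-- With `ρ i = αᵀ (I - γ P i)⁻¹` and `v i k = ρ i - ρ k`, for any `i` and any
`w` in the simplex, writing `P_w = ∑ k, w k • P k`,
`ρ iᵀ - αᵀ (I - γ P_w)⁻¹ = ∑ k, w k • (v i k)ᵀ (I - γ P k) (I - γ P_w)⁻¹`. -/
theorem mixture_resolvent_difference {X : Type*} [Fintype X] [DecidableEq X] {m : ℕ}
    (P : Fin m → Matrix X X ℝ)
    (hPnonneg : ∀ i x x', 0 ≤ P i x x') (hProw : ∀ i x, ∑ x', P i x x' = 1)
    (γ : ℝ) (hγ : γ ∈ Set.Ioo (0 : ℝ) 1)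
    (α : X → ℝ) (hαnonneg : ∀ x, 0 ≤ α x) (hαsum : ∑ x, α x = 1)
    (ρ : Fin m → X → ℝ) (hρ : ∀ i, ρ i = Matrix.vecMul α (1 - γ • P i)⁻¹)
    (v : Fin m → Fin m → X → ℝ) (hv : ∀ i k, v i k = ρ i - ρ k) :
    ∀ (i : Fin m) (w : Fin m → ℝ), (∀ k, 0 ≤ w k) → ∑ k, w k = 1 →
      ρ i - Matrix.vecMul α (1 - γ • ∑ k, w k • P k)⁻¹ =
        ∑ k, w k •
          Matrix.vecMul (Matrix.vecMul (v i k) (1 - γ • P k))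
            (1 - γ • ∑ l, w l • P l)⁻¹ :=
  mixture_resolvent_difference_general P hPnonneg hProw γ hγ α ρ hρ v hv
end

section
/- Let G be the m × m symmetric 0-1 adjacency matrix of a simple graph (zero diagonal), A = I + G, and for i ∈ [m] let P_i be the (m+3) × (m+3) row-stochastic matrix defined by: row 0 has entry 1 in column i (among columns 1..m); for j ∈ [m], row j has entry A_{j,i} in column m+1 and 1 - A_{j,i} in column m+2; rows m+1 and m+2 have entry 1 in column m+2. For w ∈ Δ_[m] let P_w = Σ_{i=1}^m w_i P_i. Then the (0, m+1) entry of P_w^2 equals the quadratic form w^T A w. -/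
open Matrix BigOperators

/-- States `0, 1, …, m, m+1, m+2` of the hardness-reduction MDP: `start` is state `0`,
`mid j` (for `j : Fin m`) are states `1, …, m`, `pre` is state `m+1`, `last` is state `m+2`. -/
inductive HardState (m : ℕ) where
  | start : HardState m
  | mid : Fin m → HardState m
  | pre : HardState m
  | last : HardState m
  deriving DecidableEq, Fintype

/-- The chain `P i` of the reduction: row `0` has a `1` in column `i` (among columns `1..m`);
row `j ∈ [m]` has `A j i` in column `m+1` and `1 - A j i` in column `m+2`; rows `m+1` and `m+2`
have a `1` in column `m+2`. -/
def hardChain {m : ℕ} (A : Matrix (Fin m) (Fin m) ℝ) (i : Fin m) :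
    Matrix (HardState m) (HardState m) ℝ :=
  Matrix.of fun r s =>
    match r, s with
    | .start, .mid j => if j = i then 1 else 0
    | .mid j, .pre => A j i
    | .mid j, .last => 1 - A j i
    | .pre, .last => 1
    | .last, .last => 1
    | _, _ => 0

/- The only path `0 → · → m+1` of length two goes through a middle state `j`, reached with
probability `w j` and left towards `m+1` with probability `(A w) j`. -/

namespace HardState

variable {m : ℕ}

def equivSum : HardState m ≃ Unit ⊕ Fin m ⊕ Unit ⊕ Unit where
  toFun
    | start => .inl ()
    | mid j => .inr (.inl j)
    | pre => .inr (.inr (.inl ()))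
    | last => .inr (.inr (.inr ()))
  invFun
    | .inl _ => start
    | .inr (.inl j) => mid j
    | .inr (.inr (.inl _)) => pre
    | .inr (.inr (.inr _)) => last
  left_inv s := by cases s <;> rfl
  right_inv s := by rcases s with _ | j | _ | _ <;> rfl

theorem sum_univ {M : Type*} [AddCommMonoid M] (f : HardState m → M) :
    ∑ s, f s = f start + ∑ j, f (mid j) + f pre + f last := by
  rw [← equivSum.symm.sum_comp]
  simp [Fintype.sum_sum_type, equivSum, add_assoc]

end HardState

section weighted

variable {m : ℕ} (A : Matrix (Fin m) (Fin m) ℝ) (w : Fin m → ℝ)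

theorem sum_smul_hardChain_apply (r s : HardState m) :
    (∑ i, w i • hardChain A i) r s = ∑ i, w i * hardChain A i r s := by
  simp only [Matrix.sum_apply, Matrix.smul_apply, smul_eq_mul]

theorem sum_smul_hardChain_start_mid (j : Fin m) :
    (∑ i, w i • hardChain A i) .start (.mid j) = w j := by
  rw [sum_smul_hardChain_apply]
  simp [hardChain]

theorem sum_smul_hardChain_mid_pre (j : Fin m) :
    (∑ i, w i • hardChain A i) (.mid j) .pre = (A *ᵥ w) j := by
  rw [sum_smul_hardChain_apply]
  simp [hardChain, mulVec, dotProduct, mul_comm]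

theorem sum_smul_hardChain_start_eq_zero {s : HardState m} (hs : ∀ j, s ≠ .mid j) :
    (∑ i, w i • hardChain A i) .start s = 0 := by
  rw [sum_smul_hardChain_apply]
  cases s with
  | mid j => exact absurd rfl (hs j)
  | _ => simp [hardChain]

end weighted

theorem hardChain_square_quadratic_form_general {m : ℕ}
    (A : Matrix (Fin m) (Fin m) ℝ)
    (w : Fin m → ℝ) :
    ((∑ i, w i • hardChain A i) ^ 2) HardState.start HardState.pre =
      w ⬝ᵥ A.mulVec w := by
  rw [sq, mul_apply, HardState.sum_univ]
  simp [sum_smul_hardChain_start_mid, sum_smul_hardChain_mid_pre,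
    sum_smul_hardChain_start_eq_zero, dotProduct]

/-- With `A = I + G` for a symmetric 0-1 adjacency matrix `G` with zero
diagonal, for `w` in the simplex the `(0, m+1)` entry of `P_w ^ 2` equals the quadratic form
`wᵀ A w`. -/
theorem hardChain_square_quadratic_form {m : ℕ}
    (G : Matrix (Fin m) (Fin m) ℝ) (hGsymm : G.IsSymm)
    (hG01 : ∀ i j, G i j = 0 ∨ G i j = 1) (hGdiag : ∀ i, G i i = 0)
    (A : Matrix (Fin m) (Fin m) ℝ) (hA : A = 1 + G)
    (w : Fin m → ℝ) (hwnonneg : ∀ i, 0 ≤ w i) (hwsum : ∑ i, w i = 1) :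
    ((∑ i, w i • hardChain A i) ^ 2) HardState.start HardState.pre =
      w ⬝ᵥ A.mulVec w :=
  hardChain_square_quadratic_form_general A w
end

section
/- Let G be the m × m symmetric 0-1 adjacency matrix of a simple graph (zero diagonal), A = I + G, and for i ∈ [m] let P_i be the (m+3) × (m+3) row-stochastic matrix defined by: row 0 has entry 1 in column i (among columns 1..m); for j ∈ [m], row j has entry A_{j,i} in column m+1 and 1 - A_{j,i} in column m+2; rows m+1 and m+2 have entry 1 in column m+2. Let γ ∈ (0,1), let α be the unit vector with all mass on state 0, and let c be the vector with entry 1 at state m+1 and 0 elsewhere. Then for every w ∈ Δ_[m], writing P_w = Σ_{i=1}^m w_i P_i, the expected discounted cost satisfies (1-γ) α^T (I - γ P_w)^{-1} c = (1-γ) γ^2 w^T A w. -/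
open Matrix BigOperators

/-! Averaging the chains gives `P_w` explicitly (`mixedChain`): from `start` go to `mid j` with
probability `w j`, from `mid j` go to `pre` with probability `(A w)_j`. Solving
`(I - γ P_w) v = c` backwards along the chain gives `v pre = 1`, `v (mid j) = γ (A w)_j` and
`v start = γ² wᵀ A w` (`discountedCostVec`). Ordering the states `start < mid < pre < last`,
the matrix `I - γ P_w` is upper triangular with diagonal `1, …, 1, 1 - γ`, hence invertible,
so `αᵀ (I - γ P_w)⁻¹ c = v start`. -/

namespace HardState

def equivOption (m : ℕ) : HardState m ≃ Option (Option (Option (Fin m))) where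
  toFun
    | .start => none
    | .pre => some none
    | .last => some (some none)
    | .mid j => some (some (some j))
  invFun
    | none => .start
    | some none => .pre
    | some (some none) => .last
    | some (some (some j)) => .mid j
  left_inv s := by cases s <;> rfl
  right_inv x := by rcases x with _ | _ | _ | j <;> rfl

theorem sum_eq {m : ℕ} {M : Type*} [AddCommMonoid M] (f : HardState m → M) :
    ∑ s, f s = f .start + ∑ j, f (.mid j) + f .pre + f .last := by
  rw [← (equivOption m).symm.sum_comp, Fintype.sum_option, Fintype.sum_option,
    Fintype.sum_option]
  simp only [equivOption, Equiv.coe_fn_symm_mk]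
  abel

end HardState

section MixedChain

variable {m : ℕ} (A : Matrix (Fin m) (Fin m) ℝ) (w : Fin m → ℝ)

def mixedChain : Matrix (HardState m) (HardState m) ℝ :=
  Matrix.of fun r s =>
    match r, s with
    | .start, .mid j => w j
    | .mid j, .pre => (A *ᵥ w) j
    | .mid j, .last => ∑ i, w i - (A *ᵥ w) j
    | .pre, .last => ∑ i, w i
    | .last, .last => ∑ i, w i
    | _, _ => 0

theorem sum_smul_hardChain : ∑ i, w i • hardChain A i = mixedChain A w := by
  ext r s
  cases r <;> cases s <;>
    simp [Matrix.sum_apply, hardChain, mixedChain, mulVec, dotProduct, mul_sub,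
      Finset.sum_sub_distrib, mul_comm]

theorem mixedChain_mulVec (z : HardState m → ℝ) :
    mixedChain A w *ᵥ z = fun
      | .start => ∑ j, w j * z (.mid j)
      | .mid j => (A *ᵥ w) j * z .pre + (∑ i, w i - (A *ᵥ w) j) * z .last
      | .pre => (∑ i, w i) * z .last
      | .last => (∑ i, w i) * z .last := by
  ext r
  cases r <;> simp [mulVec, dotProduct, HardState.sum_eq, mixedChain]

variable (γ : ℝ)

def discountedCostVec : HardState m → ℝ
  | .start => γ ^ 2 * (w ⬝ᵥ A *ᵥ w)
  | .mid j => γ * (A *ᵥ w) j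
  | .pre => 1
  | .last => 0

theorem one_sub_smul_mixedChain_mulVec_discountedCostVec :
    (1 - γ • mixedChain A w) *ᵥ discountedCostVec A w γ =
      fun s => if s = HardState.pre then 1 else 0 := by
  ext r
  cases r <;>
    simp [sub_mulVec, smul_mulVec, mixedChain_mulVec, discountedCostVec, dotProduct,
      Finset.mul_sum]
  ring_nf

theorem isUnit_one_sub_smul_mixedChain (h : γ * ∑ i, w i ≠ 1) :
    IsUnit (1 - γ • mixedChain A w) := by
  refine mulVec_injective_iff_isUnit.mp fun x y hxy => sub_eq_zero.mp ?_
  set z := x - y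
  have hz : (1 - γ • mixedChain A w) *ᵥ z = 0 := by rw [mulVec_sub, hxy, sub_self]
  have row (r : HardState m) := congrFun hz r
  simp only [sub_mulVec, one_mulVec, smul_mulVec, mixedChain_mulVec, Pi.sub_apply,
    Pi.smul_apply, smul_eq_mul, Pi.zero_apply] at row
  have hlast : z .last = 0 := by
    have : (1 - γ * ∑ i, w i) * z .last = 0 := by linarith [row .last]
    exact (mul_eq_zero.mp this).resolve_left (sub_ne_zero.mpr h.symm)
  have hpre : z .pre = 0 := by simpa [hlast] using row .pre
  have hmid (j : Fin m) : z (.mid j) = 0 := by simpa [hlast, hpre] using row (.mid j)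
  have hstart : z .start = 0 := by simpa [hmid] using row .start
  ext (_ | j | _ | _)
  exacts [hstart, hmid j, hpre, hlast]

end MixedChain

theorem hardChain_discounted_cost_general {m : ℕ}
    (A : Matrix (Fin m) (Fin m) ℝ)
    (γ : ℝ) (hγ : γ ∈ Set.Ioo (0 : ℝ) 1)
    (α : HardState m → ℝ) (hα : α = fun s => if s = HardState.start then 1 else 0)
    (c : HardState m → ℝ) (hc : c = fun s => if s = HardState.pre then 1 else 0) :
    ∀ w : Fin m → ℝ, (∀ i, 0 ≤ w i) → ∑ i, w i = 1 →
      (1 - γ) * (Matrix.vecMul α (1 - γ • ∑ i, w i • hardChain A i)⁻¹ ⬝ᵥ c) =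
        (1 - γ) * γ ^ 2 * (w ⬝ᵥ A.mulVec w) := by
  intro w _ hw
  have hγ1 : γ * ∑ i, w i ≠ 1 := by rw [hw, mul_one]; exact hγ.2.ne
  have := (isUnit_one_sub_smul_mixedChain A w γ hγ1).invertible
  rw [sum_smul_hardChain, ← dotProduct_mulVec, hc, inv_mulVec_eq_vec
    (one_sub_smul_mixedChain_mulVec_discountedCostVec A w γ).symm, hα]
  simp [dotProduct, discountedCostVec, mul_assoc]

/-- With `A = I + G`, initial distribution `α` concentrated on state `0` and
cost vector `c` equal to the indicator of state `m+1`, for every `w` in the simplex the expected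
discounted cost of the mixture chain is `(1-γ) αᵀ (I - γ P_w)⁻¹ c = (1-γ) γ² wᵀ A w`. -/
theorem hardChain_discounted_cost {m : ℕ}
    (G : Matrix (Fin m) (Fin m) ℝ) (hGsymm : G.IsSymm)
    (hG01 : ∀ i j, G i j = 0 ∨ G i j = 1) (hGdiag : ∀ i, G i i = 0)
    (A : Matrix (Fin m) (Fin m) ℝ) (hA : A = 1 + G)
    (γ : ℝ) (hγ : γ ∈ Set.Ioo (0 : ℝ) 1)
    (α : HardState m → ℝ) (hα : α = fun s => if s = HardState.start then 1 else 0)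
    (c : HardState m → ℝ) (hc : c = fun s => if s = HardState.pre then 1 else 0) :
    ∀ w : Fin m → ℝ, (∀ i, 0 ≤ w i) → ∑ i, w i = 1 →
      (1 - γ) * (Matrix.vecMul α (1 - γ • ∑ i, w i • hardChain A i)⁻¹ ⬝ᵥ c) =
        (1 - γ) * γ ^ 2 * (w ⬝ᵥ A.mulVec w) :=
  hardChain_discounted_cost_general A γ hγ α hα c hc
end
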